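/- arXiv:2411.18610 — 2 statements merged into one kernel-verified Lean document; each statement's English description precedes it below -/
import Mathlib

section
/- For every p ∈ ℝ², setting p₀ = √(1+|p|²) and p̂ = p/p₀, the integral over the closed unit disc in ℝ² satisfies ∫_{|ξ|≤1} (1 + p̂·ξ)^{-3/2} (1 - |ξ|²)^{-1/2} dξ ≤ 4π p₀. -/
open MeasureTheory Set RealInnerProductSpace
open scoped ENNReal

/-! Rotating `p̂` onto the first axis, with `a = |p̂| < 1`, and integrating out the second
coordinate first: for `|x| < 1`, `∫ (1 - x² - y²)^{-1/2} dy = π` over `x² + y² ≤ 1`, so the weight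
`(1 - |ξ|²)^{-1/2} dξ` projects to `π dx` on `[-1, 1]`. The integral is therefore
`π ∫_{-1}^{1} (1 + a x)^{-3/2} dx = 4π / (√(1 - a²) (√(1 + a) + √(1 - a)))`, and
`√(1 + a) ≥ 1`, `√(1 - a²) = 1 / p₀`. -/

lemma rpow_neg_half_eq_inv_sqrt {x : ℝ} (hx : 0 ≤ x) : x ^ (-(1 : ℝ) / 2) = (Real.sqrt x)⁻¹ := by
  rw [neg_div, Real.rpow_neg hx, Real.sqrt_eq_rpow]

lemma hasDerivAt_arcsin_div {b y : ℝ} (hy : y ∈ Ioo (-b) b) :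
    HasDerivAt (fun t => Real.arcsin (t / b)) ((b ^ 2 - y ^ 2) ^ (-(1 : ℝ) / 2)) y := by
  obtain ⟨h₁, h₂⟩ := hy
  have hb : 0 < b := by linarith
  have hlt : -1 < y / b ∧ y / b < 1 :=
    ⟨by rw [lt_div_iff₀ hb]; linarith, by rw [div_lt_iff₀ hb]; linarith⟩
  refine ((Real.hasDerivAt_arcsin hlt.1.ne' hlt.2.ne).comp y
    ((hasDerivAt_id y).div_const b)).congr_deriv ?_
  have hpos : 0 < b ^ 2 - y ^ 2 := by nlinarith
  rw [rpow_neg_half_eq_inv_sqrt hpos.le,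
    show 1 - (y / b) ^ 2 = (b ^ 2 - y ^ 2) / b ^ 2 by field_simp, Real.sqrt_div' _ (sq_nonneg b),
    Real.sqrt_sq hb.le]
  field_simp

lemma lintegral_Icc_sq_sub_sq_rpow_neg_half {b : ℝ} (hb : 0 < b) :
    ∫⁻ y in Icc (-b) b, ENNReal.ofReal ((b ^ 2 - y ^ 2) ^ (-(1 : ℝ) / 2)) =
      ENNReal.ofReal Real.pi := by
  have hcont : ContinuousOn (fun t => Real.arcsin (t / b)) (Icc (-b) b) := by fun_prop
  have hnonneg : ∀ y ∈ Ioc (-b) b, 0 ≤ (b ^ 2 - y ^ 2) ^ (-(1 : ℝ) / 2) :=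
    fun y hy => Real.rpow_nonneg (by nlinarith [hy.1, hy.2]) _
  have hint := intervalIntegral.integrableOn_deriv_of_nonneg hcont
    (fun y hy => hasDerivAt_arcsin_div hy) fun y hy => hnonneg y (Ioo_subset_Ioc_self hy)
  rw [Measure.restrict_congr_set Ioc_ae_eq_Icc.symm, ← ofReal_integral_eq_lintegral_ofReal hint
      (ae_restrict_of_forall_mem measurableSet_Ioc hnonneg),
    ← intervalIntegral.integral_of_le (by linarith),
    intervalIntegral.integral_eq_sub_of_hasDerivAt_of_le (by linarith) hcont
      (fun y hy => hasDerivAt_arcsin_div hy)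
      ((intervalIntegrable_iff_integrableOn_Ioc_of_le (by linarith)).2 hint)]
  simp [neg_div, div_self hb.ne']

lemma lintegral_disc_slice_weight (x : ℝ) :
    ∫⁻ y in {y : ℝ | x ^ 2 + y ^ 2 ≤ 1}, ENNReal.ofReal ((1 - (x ^ 2 + y ^ 2)) ^ (-(1 : ℝ) / 2)) =
      (Ioo (-1) 1).indicator (fun _ => ENNReal.ofReal Real.pi) x := by
  by_cases hx : x ∈ Ioo (-1) 1
  · set b := Real.sqrt (1 - x ^ 2)
    have hb : 0 < b := Real.sqrt_pos.2 (by nlinarith [hx.1, hx.2])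
    have hb2 : b ^ 2 = 1 - x ^ 2 := Real.sq_sqrt (by nlinarith [hx.1, hx.2])
    have hslice : {y : ℝ | x ^ 2 + y ^ 2 ≤ 1} = Icc (-b) b := by
      ext y
      rw [mem_Icc, ← abs_le, ← sq_le_sq₀ (abs_nonneg _) hb.le, sq_abs, hb2]
      exact ⟨fun h => by linarith [h.out], fun h => show x ^ 2 + y ^ 2 ≤ 1 by linarith⟩
    rw [indicator_of_mem hx, hslice, ← lintegral_Icc_sq_sub_sq_rpow_neg_half hb]
    simp_rw [hb2, sub_add_eq_sub_sub]
  · have hnull : volume {y : ℝ | x ^ 2 + y ^ 2 ≤ 1} = 0 := by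
      refine measure_mono_null (fun y hy => ?_) (measure_singleton 0)
      simp only [mem_Ioo, not_and_or, not_lt] at hx
      rw [mem_singleton_iff, ← sq_eq_zero_iff]
      rcases hx with hx | hx <;> nlinarith [sq_nonneg y, hy.out]
    rw [indicator_of_notMem hx, setLIntegral_measure_zero _ _ hnull]

lemma lintegral_disc_fst_mul_weight {g : ℝ → ℝ≥0∞} (hg : Measurable g) :
    ∫⁻ z in {z : ℝ × ℝ | z.1 ^ 2 + z.2 ^ 2 ≤ 1},
        g z.1 * ENNReal.ofReal ((1 - (z.1 ^ 2 + z.2 ^ 2)) ^ (-(1 : ℝ) / 2)) =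
      ENNReal.ofReal Real.pi * ∫⁻ x in Ioo (-1) 1, g x := by
  have hD : MeasurableSet {z : ℝ × ℝ | z.1 ^ 2 + z.2 ^ 2 ≤ 1} :=
    measurableSet_le (by fun_prop) measurable_const
  have hslice (x : ℝ) : MeasurableSet {y : ℝ | x ^ 2 + y ^ 2 ≤ 1} :=
    measurableSet_le (by fun_prop) measurable_const
  rw [← lintegral_indicator hD, Measure.volume_eq_prod,
    lintegral_prod _ ((Measurable.indicator (by fun_prop) hD).aemeasurable)]
  calc ∫⁻ x, ∫⁻ y, _ = ∫⁻ x, g x * (Ioo (-1) 1).indicator (fun _ => ENNReal.ofReal Real.pi) x := by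
        refine lintegral_congr fun x => ?_
        rw [← lintegral_disc_slice_weight, ← lintegral_const_mul _ (by fun_prop),
          ← lintegral_indicator (hslice x)]
        rfl
    _ = _ := by
        simp_rw [← indicator_mul_right]
        rw [lintegral_indicator measurableSet_Ioo, ← lintegral_const_mul _ hg]
        simp_rw [mul_comm]

lemma lintegral_closedBall_coord_mul_weight {g : ℝ → ℝ≥0∞} (hg : Measurable g) :
    ∫⁻ ξ in Metric.closedBall (0 : EuclideanSpace ℝ (Fin 2)) 1,
        g (ξ 0) * ENNReal.ofReal ((1 - ‖ξ‖ ^ 2) ^ (-(1 : ℝ) / 2)) =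
      ENNReal.ofReal Real.pi * ∫⁻ x in Ioo (-1) 1, g x := by
  let e : EuclideanSpace ℝ (Fin 2) ≃ᵐ ℝ × ℝ :=
    (MeasurableEquiv.toLp 2 (Fin 2 → ℝ)).symm.trans MeasurableEquiv.finTwoArrow
  have he : MeasurePreserving e.symm :=
    ((volume_preserving_finTwoArrow ℝ).comp (PiLp.volume_preserving_ofLp (Fin 2))).symm
  have hnorm (z : ℝ × ℝ) : ‖e.symm z‖ ^ 2 = z.1 ^ 2 + z.2 ^ 2 := by
    simp [EuclideanSpace.norm_sq_eq, Fin.sum_univ_two, e]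
  have hball : e.symm ⁻¹' Metric.closedBall 0 1 = {z : ℝ × ℝ | z.1 ^ 2 + z.2 ^ 2 ≤ 1} := by
    ext z
    rw [mem_preimage, mem_closedBall_zero_iff, ← sq_le_one_iff₀ (norm_nonneg _), hnorm]
    rfl
  rw [← he.setLIntegral_comp_preimage_emb e.symm.measurableEmbedding, hball,
    ← lintegral_disc_fst_mul_weight hg]
  simp_rw [hnorm]
  rfl

lemma setLIntegral_closedBall_inner_eq_of_norm_eq {E : Type*} [NormedAddCommGroup E]
    [InnerProductSpace ℝ E] [FiniteDimensional ℝ E] [MeasurableSpace E] [BorelSpace E]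
    {u v : E} (h : ‖u‖ = ‖v‖) (r : ℝ) (f : ℝ → ℝ → ℝ≥0∞) :
    ∫⁻ ξ in Metric.closedBall 0 r, f ⟪u, ξ⟫ ‖ξ‖ = ∫⁻ ξ in Metric.closedBall 0 r, f ⟪v, ξ⟫ ‖ξ‖ := by
  let R := (ℝ ∙ (v - u))ᗮ.reflection
  have hball : R ⁻¹' Metric.closedBall 0 r = Metric.closedBall 0 r := by
    ext ξ
    simp [R]
  rw [← R.measurePreserving.setLIntegral_comp_preimage_emb
    R.toHomeomorph.measurableEmbedding, hball]
  have hinner (η : E) : ⟪u, R η⟫ = ⟪v, η⟫ := by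
    rw [← Submodule.reflection_sub h.symm, LinearIsometryEquiv.inner_map_map]
  simp_rw [hinner, LinearIsometryEquiv.norm_map]

lemma lintegral_closedBall_inner_mul_weight (q : EuclideanSpace ℝ (Fin 2)) {g : ℝ → ℝ≥0∞}
    (hg : Measurable g) :
    ∫⁻ ξ in Metric.closedBall 0 1, g ⟪q, ξ⟫ * ENNReal.ofReal ((1 - ‖ξ‖ ^ 2) ^ (-(1 : ℝ) / 2)) =
      ENNReal.ofReal Real.pi * ∫⁻ x in Ioo (-1) 1, g (‖q‖ * x) := by
  have hnorm : ‖q‖ = ‖‖q‖ • EuclideanSpace.single (0 : Fin 2) (1 : ℝ)‖ := by simp [norm_smul]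
  rw [setLIntegral_closedBall_inner_eq_of_norm_eq hnorm 1
    (fun t r => g t * ENNReal.ofReal ((1 - r ^ 2) ^ (-(1 : ℝ) / 2)))]
  simp only [real_inner_smul_left, EuclideanSpace.inner_single_left, map_one, one_mul]
  exact lintegral_closedBall_coord_mul_weight (g := fun x => g (‖q‖ * x)) (by fun_prop)

lemma integral_one_add_mul_rpow_neg_three_halves_le {a : ℝ} (ha0 : 0 ≤ a) (ha1 : a < 1) :
    ∫ x in (-1)..1, (1 + a * x) ^ (-(3 : ℝ) / 2) ≤ 4 / Real.sqrt (1 - a ^ 2) := by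
  rcases ha0.eq_or_lt with rfl | ha
  · norm_num
  have hpos {x : ℝ} (hx : x ∈ uIcc (-1) 1) : 0 < 1 + a * x := by
    rw [uIcc_of_le (by norm_num)] at hx
    nlinarith [mul_nonneg ha0 (neg_le_iff_add_nonneg.1 hx.1)]
  have hderiv {x : ℝ} (hx : x ∈ uIcc (-1) 1) :
      HasDerivAt (fun x => -(2 / a) * (1 + a * x) ^ (-(1 : ℝ) / 2))
        ((1 + a * x) ^ (-(3 : ℝ) / 2)) x := by
    have := ((((hasDerivAt_id x).const_mul a).const_add 1).rpow_const
      (p := -(1 : ℝ) / 2) (Or.inl (hpos hx).ne')).const_mul (-(2 / a))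
    refine this.congr_deriv ?_
    rw [show -(1 : ℝ) / 2 - 1 = -(3 : ℝ) / 2 by norm_num]
    field_simp
    rfl
  have hint : IntervalIntegrable (fun x => (1 + a * x) ^ (-(3 : ℝ) / 2)) volume (-1) 1 :=
    (ContinuousOn.rpow_const (by fun_prop) fun x hx => Or.inl (hpos hx).ne').intervalIntegrable
  have hu : 0 < Real.sqrt (1 + a) := Real.sqrt_pos.2 (by linarith)
  have hv : 0 < Real.sqrt (1 - a) := Real.sqrt_pos.2 (by linarith)
  have hu2 := Real.sq_sqrt (by linarith : 0 ≤ 1 + a)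
  have hv2 := Real.sq_sqrt (by linarith : 0 ≤ 1 - a)
  rw [intervalIntegral.integral_eq_sub_of_hasDerivAt (fun x hx => hderiv hx) hint, mul_one,
    mul_neg_one, ← sub_eq_add_neg, rpow_neg_half_eq_inv_sqrt (by linarith),
    rpow_neg_half_eq_inv_sqrt (by linarith), show 1 - a ^ 2 = (1 + a) * (1 - a) by ring,
    Real.sqrt_mul (by linarith)]
  set u := Real.sqrt (1 + a)
  set v := Real.sqrt (1 - a)
  have hu1 : 1 ≤ u := Real.one_le_sqrt.2 (by linarith)
  have hvu : v ≤ u := Real.sqrt_le_sqrt (by linarith)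
  -- `(u - v) (u + v) = u² - v² = 2a` and `u + v ≥ 1`
  have hdiff : u - v ≤ 2 * a := by nlinarith
  calc -(2 / a) * u⁻¹ - -(2 / a) * v⁻¹ = 2 * (u - v) / a / (u * v) := by field_simp; ring
    _ ≤ 4 / (u * v) := by
      gcongr
      rw [div_le_iff₀ ha]
      linarith

theorem integral_closedBall_one_add_inner_rpow_mul_weight (q : EuclideanSpace ℝ (Fin 2))
    (hq : ‖q‖ < 1) :
    ∫ ξ in Metric.closedBall 0 1, (1 + ⟪q, ξ⟫) ^ (-(3 : ℝ) / 2) * (1 - ‖ξ‖ ^ 2) ^ (-(1 : ℝ) / 2) =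
      Real.pi * ∫ x in (-1)..1, (1 + ‖q‖ * x) ^ (-(3 : ℝ) / 2) := by
  have hbase {ξ : EuclideanSpace ℝ (Fin 2)} (hξ : ξ ∈ Metric.closedBall 0 1) :
      0 ≤ 1 + ⟪q, ξ⟫ := by
    have := (abs_real_inner_le_norm q ξ).trans
      (mul_le_one₀ hq.le (norm_nonneg ξ) (mem_closedBall_zero_iff.1 hξ))
    linarith [neg_abs_le ⟪q, ξ⟫]
  have hpos {x : ℝ} (hx : x ∈ Icc (-1) 1) : 0 < 1 + ‖q‖ * x := by
    nlinarith [mul_nonneg (norm_nonneg q) (neg_le_iff_add_nonneg.1 hx.1)]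
  have hcont : ContinuousOn (fun x : ℝ => (1 + ‖q‖ * x) ^ (-(3 : ℝ) / 2)) (Icc (-1) 1) :=
    ContinuousOn.rpow_const (by fun_prop) fun x hx => Or.inl (hpos hx).ne'
  have hI : ∫⁻ x in Ioo (-1) 1, ENNReal.ofReal ((1 + ‖q‖ * x) ^ (-(3 : ℝ) / 2)) =
      ENNReal.ofReal (∫ x in (-1)..1, (1 + ‖q‖ * x) ^ (-(3 : ℝ) / 2)) := by
    rw [intervalIntegral.integral_of_le (by norm_num), ofReal_integral_eq_lintegral_ofReal
      (hcont.integrableOn_Icc.mono_set Ioc_subset_Icc_self)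
      (ae_restrict_of_forall_mem measurableSet_Ioc
        fun x hx => Real.rpow_nonneg (hpos (Ioc_subset_Icc_self hx)).le _)]
    exact setLIntegral_congr Ioo_ae_eq_Ioc
  have hnonneg : 0 ≤ᵐ[volume.restrict (Metric.closedBall 0 1)] fun ξ =>
      (1 + ⟪q, ξ⟫) ^ (-(3 : ℝ) / 2) * (1 - ‖ξ‖ ^ 2) ^ (-(1 : ℝ) / 2) :=
    ae_restrict_of_forall_mem measurableSet_closedBall fun ξ hξ =>
      mul_nonneg (Real.rpow_nonneg (hbase hξ) _) (Real.rpow_nonneg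
        (sub_nonneg.2 (pow_le_one₀ (norm_nonneg ξ) (mem_closedBall_zero_iff.1 hξ))) _)
  rw [integral_eq_lintegral_of_nonneg_ae hnonneg (by fun_prop),
    setLIntegral_congr_fun measurableSet_closedBall
      fun ξ hξ => ENNReal.ofReal_mul (Real.rpow_nonneg (hbase hξ) _),
    lintegral_closedBall_inner_mul_weight q
      (g := fun t => ENNReal.ofReal ((1 + t) ^ (-(3 : ℝ) / 2))) (by fun_prop),
    hI, ← ENNReal.ofReal_mul Real.pi_pos.le, ENNReal.toReal_ofReal
      (mul_nonneg Real.pi_pos.le (intervalIntegral.integral_nonneg (by norm_num)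
        fun x hx => Real.rpow_nonneg (hpos hx).le _))]

/-- For every `p ∈ ℝ²`, with `p₀ = √(1+|p|²)` and `p̂ = p/p₀`, the integral over the closed
unit disc of `(1 + p̂·ξ)^{-3/2} (1 - |ξ|²)^{-1/2}` is at most `4π p₀`. -/
theorem stmt_2 (p : EuclideanSpace ℝ (Fin 2)) :
    (∫ ξ in Metric.closedBall (0 : EuclideanSpace ℝ (Fin 2)) 1,
        (1 + ⟪(Real.sqrt (1 + ‖p‖ ^ 2))⁻¹ • p, ξ⟫) ^ (-(3 : ℝ) / 2) *
          (1 - ‖ξ‖ ^ 2) ^ (-(1 : ℝ) / 2)) ≤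
      4 * Real.pi * Real.sqrt (1 + ‖p‖ ^ 2) := by
  set p₀ := Real.sqrt (1 + ‖p‖ ^ 2)
  have hp₀ : 0 < p₀ := Real.sqrt_pos.2 (by positivity)
  have hp₀2 : p₀ ^ 2 = 1 + ‖p‖ ^ 2 := Real.sq_sqrt (by positivity)
  have hnorm : ‖p₀⁻¹ • p‖ = ‖p‖ / p₀ := by
    rw [norm_smul, norm_inv, Real.norm_of_nonneg hp₀.le, inv_mul_eq_div]
  have hq : ‖p₀⁻¹ • p‖ < 1 := by
    rw [hnorm, div_lt_one hp₀, Real.lt_sqrt (norm_nonneg p)]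
    linarith
  have hweight : Real.sqrt (1 - ‖p₀⁻¹ • p‖ ^ 2) = p₀⁻¹ := by
    rw [hnorm, show 1 - (‖p‖ / p₀) ^ 2 = p₀⁻¹ ^ 2 by field_simp; linarith,
      Real.sqrt_sq (inv_nonneg.2 hp₀.le)]
  rw [integral_closedBall_one_add_inner_rpow_mul_weight _ hq]
  calc Real.pi * ∫ x in (-1)..1, (1 + ‖p₀⁻¹ • p‖ * x) ^ (-(3 : ℝ) / 2)
      ≤ Real.pi * (4 / Real.sqrt (1 - ‖p₀⁻¹ • p‖ ^ 2)) :=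
        mul_le_mul_of_nonneg_left
          (integral_one_add_mul_rpow_neg_three_halves_le (norm_nonneg _) hq) Real.pi_pos.le
    _ = 4 * Real.pi * p₀ := by rw [hweight, div_inv_eq_mul]; ring
end

section
/- There is an absolute constant C > 0 with the following property. For all reals r > 0, ψ > 0 and all a, b with −3π/4 ≤ a ≤ b ≤ 3π/4, ∫_a^b ( 1 − (r/(r+2ψ)) cos λ )^{-1} dλ ≤ C · (b−a) · ((r+2ψ)/ψ) · sup_{λ ∈ [a,b]} ( 1 + ((r+ψ)/ψ) tan²(λ/2) )^{-1}. -/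
open MeasureTheory Real Set

/-!
With `c = cos (λ/2)`, `s = sin (λ/2)` one has `1 - (r/(r+2ψ)) cos λ = 2 (ψ + r s²)/(r+2ψ)` and
`(1 + ((r+ψ)/ψ) tan² (λ/2))⁻¹ = ψ c²/(ψ + r s²)`, so the integrand times `1 + cos λ = 2 c²` is
exactly `(r+2ψ)/ψ` times the weight inside the supremum. On `|λ| ≤ 3π/4` we have
`1 + cos λ ≥ 1 - √2/2 > 1/4`, which gives a pointwise bound with `C = 4`; integrate it.
-/

lemma one_sub_mul_cos_pos {k : ℝ} (hk : |k| < 1) (x : ℝ) : 0 < 1 - k * cos x := by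
  have : k * cos x ≤ |k| := by
    calc k * cos x ≤ |k * cos x| := le_abs_self _
      _ = |k| * |cos x| := abs_mul k (cos x)
      _ ≤ |k| := mul_le_of_le_one_right (abs_nonneg k) (abs_cos_le_one x)
  linarith

lemma abs_div_add_two_mul_lt_one {r ψ : ℝ} (hr : 0 ≤ r) (hψ : 0 < ψ) : |r / (r + 2 * ψ)| < 1 := by
  rw [abs_of_nonneg (by positivity), div_lt_one (by positivity)]
  linarith

lemma inv_one_sub_mul_cos_mul_one_add_cos {r ψ x : ℝ} (hr : 0 ≤ r) (hψ : 0 < ψ)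
    (hx : cos (x / 2) ≠ 0) :
    (1 - r / (r + 2 * ψ) * cos x)⁻¹ * (1 + cos x) =
      (r + 2 * ψ) / ψ * (1 + (r + ψ) / ψ * tan (x / 2) ^ 2)⁻¹ := by
  have hcos : cos x = 2 * cos (x / 2) ^ 2 - 1 := by rw [← cos_two_mul]; ring_nf
  have hsin := sin_sq_add_cos_sq (x / 2)
  have hP : 0 < ψ + r * sin (x / 2) ^ 2 := by positivity
  have hden : 1 - r / (r + 2 * ψ) * cos x = 2 * (ψ + r * sin (x / 2) ^ 2) / (r + 2 * ψ) := by
    rw [hcos]; field_simp; linear_combination (-2 * r) * hsin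
  have htan : 1 + (r + ψ) / ψ * tan (x / 2) ^ 2 =
      (ψ + r * sin (x / 2) ^ 2) / (ψ * cos (x / 2) ^ 2) := by
    rw [tan_eq_sin_div_cos]; field_simp; linear_combination ψ * hsin
  rw [hden, htan, hcos]
  field_simp
  ring

lemma quarter_le_one_add_cos {x : ℝ} (hx : |x| ≤ 3 * π / 4) : 1 / 4 ≤ 1 + cos x := by
  have h3 : cos (3 * π / 4) = -(√2 / 2) := by
    rw [show 3 * π / 4 = π - π / 4 by ring, cos_pi_sub, cos_pi_div_four]
  have hmono : cos (3 * π / 4) ≤ cos x := by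
    rw [← cos_abs x]
    exact cos_le_cos_of_nonneg_of_le_pi (abs_nonneg x) (by linarith [pi_pos]) hx
  have hsqrt : √2 < 3 / 2 := by
    rw [sqrt_lt' (by norm_num)]; norm_num
  linarith

lemma inv_one_sub_mul_cos_le {r ψ x : ℝ} (hr : 0 ≤ r) (hψ : 0 < ψ) (hx : |x| ≤ 3 * π / 4) :
    (1 - r / (r + 2 * ψ) * cos x)⁻¹ ≤
      4 * ((r + 2 * ψ) / ψ) * (1 + (r + ψ) / ψ * tan (x / 2) ^ 2)⁻¹ := by
  have hhalf : cos (x / 2) ≠ 0 := by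
    refine (cos_pos_of_mem_Ioo ⟨?_, ?_⟩).ne' <;> linarith [abs_le.1 hx, pi_pos]
  have hpos := inv_pos.2 (one_sub_mul_cos_pos (abs_div_add_two_mul_lt_one hr hψ) x)
  calc (1 - r / (r + 2 * ψ) * cos x)⁻¹
      ≤ 4 * ((1 - r / (r + 2 * ψ) * cos x)⁻¹ * (1 + cos x)) := by
        nlinarith [quarter_le_one_add_cos hx]
    _ = _ := by rw [inv_one_sub_mul_cos_mul_one_add_cos hr hψ hhalf]; ring

lemma intervalIntegral_le_sub_mul {f : ℝ → ℝ} {a b M : ℝ} (hab : a ≤ b)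
    (hf : IntervalIntegrable f volume a b) (h : ∀ x ∈ Icc a b, f x ≤ M) :
    ∫ x in a..b, f x ≤ (b - a) * M := by
  simpa using intervalIntegral.integral_mono_on hab hf intervalIntegrable_const h

lemma le_biSup_of_forall_le {α : Type*} {g : α → ℝ} {s : Set α} {M : ℝ} (hM : ∀ y, g y ≤ M)
    {x : α} (hx : x ∈ s) : g x ≤ ⨆ y ∈ s, g y :=
  le_ciSup₂ (f := fun y (_ : y ∈ s) ↦ g y)
    ⟨M, by simp only [mem_upperBounds, mem_iUnion, mem_range]; rintro _ ⟨y, _, rfl⟩; exact hM y⟩ x hx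

/-- There is an absolute constant `C > 0` such that for all `r, ψ > 0` and
`-3π/4 ≤ a ≤ b ≤ 3π/4`:
`∫_a^b (1 - (r/(r+2ψ)) cos λ)⁻¹ dλ ≤ C (b-a) ((r+2ψ)/ψ) sup_{λ ∈ [a,b]} (1 + ((r+ψ)/ψ) tan²(λ/2))⁻¹`. -/
theorem stmt_16 :
    ∃ C > (0 : ℝ), ∀ r ψ a b : ℝ, 0 < r → 0 < ψ →
      -(3 * Real.pi / 4) ≤ a → a ≤ b → b ≤ 3 * Real.pi / 4 →
      (∫ l in a..b, (1 - r / (r + 2 * ψ) * Real.cos l)⁻¹) ≤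
        C * (b - a) * ((r + 2 * ψ) / ψ) *
          ⨆ l ∈ Set.Icc a b, (1 + (r + ψ) / ψ * Real.tan (l / 2) ^ 2)⁻¹ := by
  refine ⟨4, by norm_num, fun r ψ a b hr hψ ha hab hb ↦ ?_⟩
  have hcont : Continuous fun l ↦ (1 - r / (r + 2 * ψ) * cos l)⁻¹ :=
    (continuous_const.sub (continuous_const.mul continuous_cos)).inv₀
      fun l ↦ (one_sub_mul_cos_pos (abs_div_add_two_mul_lt_one hr.le hψ) l).ne'
  have hweight_le_one : ∀ l, (1 + (r + ψ) / ψ * tan (l / 2) ^ 2)⁻¹ ≤ 1 := fun l ↦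
    inv_le_one_of_one_le₀ (le_add_of_nonneg_right (by positivity))
  calc (∫ l in a..b, (1 - r / (r + 2 * ψ) * cos l)⁻¹)
      ≤ (b - a) * (4 * ((r + 2 * ψ) / ψ) *
          ⨆ l ∈ Icc a b, (1 + (r + ψ) / ψ * tan (l / 2) ^ 2)⁻¹) := by
        refine intervalIntegral_le_sub_mul hab (hcont.intervalIntegrable a b) fun x hx ↦ ?_
        refine (inv_one_sub_mul_cos_le hr.le hψ (abs_le.2 ⟨?_, ?_⟩)).trans ?_
        · linarith [hx.1]
        · linarith [hx.2]
        · gcongr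
          exact le_biSup_of_forall_le hweight_le_one hx
    _ = _ := by ring
end
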